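/- Define R(q, β) = (q! / (β)_{q+1}) · ∑_{0 ≤ i_1 ≤ ... ≤ i_{s-1} ≤ q} ∏_{r=1}^{s-1} 1/(β + i_r) for a fixed integer s ≥ 2 (interpreting the sum as 1 when s = 1). Then for every complex β not in {0, -1, -2, ...} and every integer q ≥ 0, R(q+1, β) = R(q, β) − R(q, β+1). -/

import Mathlib

open scoped Classical

noncomputable section

/-- R(q,β) = (q!/(β)_{q+1}) ∑_{0 ≤ i₁ ≤ ... ≤ i_{s-1} ≤ q} ∏_r 1/(β+i_r). -/
def R (s : ℕ) (q : ℕ) (β : ℂ) : ℂ :=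
  (Nat.factorial q : ℂ) / (∏ j ∈ Finset.range (q + 1), (β + j)) *
    ∑ f ∈ Finset.univ.filter (fun f : Fin (s - 1) → Fin (q + 1) => Monotone f),
      ∏ r, (β + ((f r : ℕ) : ℂ))⁻¹

/-!
The sum in `R s q β` is the complete homogeneous symmetric polynomial `h_{s-1}` of the values
`1/(β + i)`, `i ≤ q`. Splitting the nondecreasing index tuples according to whether the smallest
index is `0`, resp. whether the largest one is the top index (the same split after reversing the
order of the indices), gives two recursions for `h_k` in the number of variables. Eliminating
`h_{k-1}` between them yields
`n h_k(1/β, …, 1/(β+n)) = (β+n) h_k(1/β, …, 1/(β+n-1)) - β h_k(1/(β+1), …, 1/(β+n))`,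
which becomes the recursion for `R` after division by the Pochhammer symbols.
-/

open Finset

section CompleteHomogeneous

variable {A : Type*} [CommSemiring A]

/-- `h_k (w 0, …, w (n - 1))`: a nondecreasing `k`-tuple of indices is a multiset of size `k`. -/
def completeHomogeneous (k : ℕ) {n : ℕ} (w : Fin n → A) : A :=
  ∑ f ∈ univ.filter (fun f : Fin k → Fin n => Monotone f), ∏ r, w (f r)

theorem completeHomogeneous_zero {n : ℕ} (w : Fin n → A) : completeHomogeneous 0 w = 1 := by
  simp [completeHomogeneous, Subsingleton.monotone]

theorem completeHomogeneous_comp_rev (k : ℕ) {n : ℕ} (w : Fin n → A) :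
    completeHomogeneous k (w ∘ Fin.rev) = completeHomogeneous k w := by
  have hrev : ∀ f : Fin k → Fin n, Monotone f → Monotone (Fin.rev ∘ f ∘ Fin.rev) :=
    fun f hf a b hab => Fin.rev_le_rev.2 (hf (Fin.rev_le_rev.2 hab))
  refine sum_nbij' (fun f => Fin.rev ∘ f ∘ Fin.rev) (fun f => Fin.rev ∘ f ∘ Fin.rev)
    (by simpa using hrev) (by simpa using hrev) (fun f _ => by ext; simp)
    (fun f _ => by ext; simp) fun f _ => ?_
  exact (Equiv.prod_comp Fin.revPerm fun r => w (Fin.rev (f r))).symm.trans (by simp)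

theorem monotone_cons_zero_iff {m n : ℕ} {g : Fin m → Fin (n + 1)} :
    Monotone (Fin.cons 0 g : Fin (m + 1) → Fin (n + 1)) ↔ Monotone g := by
  refine ⟨fun h a b hab => by simpa using h (Fin.succ_le_succ_iff.2 hab), fun h a b hab => ?_⟩
  induction a using Fin.cases with
  | zero => exact Fin.zero_le _
  | succ a =>
    induction b using Fin.cases with
    | zero => exact absurd hab (by simp)
    | succ b => simpa using h (Fin.succ_le_succ_iff.1 hab)

theorem completeHomogeneous_succ_eq_comp_succ (m : ℕ) {n : ℕ} (w : Fin (n + 1) → A) :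
    completeHomogeneous (m + 1) w =
      completeHomogeneous (m + 1) (w ∘ Fin.succ) + w 0 * completeHomogeneous m w := by
  have hcons : ∑ f : Fin (m + 1) → Fin (n + 1) with Monotone f ∧ f 0 = 0, ∏ r, w (f r) =
      w 0 * completeHomogeneous m w := by
    rw [completeHomogeneous, mul_sum]
    refine (sum_nbij (Fin.cons 0) (by simp [monotone_cons_zero_iff])
      (Fin.cons_right_injective _).injOn (fun f hf => ?_)
      (fun g _ => by simp [Fin.prod_univ_succ])).symm
    simp only [coe_filter, mem_univ, true_and, Set.mem_ofPred_eq] at hf ⊢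
    refine ⟨Fin.tail f, hf.1.comp Fin.strictMono_succ.monotone, ?_⟩
    rw [← hf.2, Fin.cons_self_tail]
  have hsucc : ∑ f : Fin (m + 1) → Fin (n + 1) with Monotone f ∧ f 0 ≠ 0, ∏ r, w (f r) =
      completeHomogeneous (m + 1) (w ∘ Fin.succ) := by
    refine (sum_nbij (Fin.succ ∘ ·) (fun g hg => ?_) (Fin.succ_injective _).comp_left.injOn
      (fun f hf => ?_) (fun g _ => rfl)).symm
    · simp only [mem_filter, mem_univ, true_and] at hg ⊢
      exact ⟨Fin.strictMono_succ.monotone.comp hg, Fin.succ_ne_zero _⟩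
    simp only [coe_filter, mem_univ, true_and, Set.mem_ofPred_eq] at hf ⊢
    have hne : ∀ r, f r ≠ 0 := fun r h0 =>
      hf.2 (le_antisymm (h0 ▸ hf.1 (Fin.zero_le r)) (Fin.zero_le _))
    refine ⟨fun r => (f r).pred (hne r), fun a b hab => ?_, funext fun r => Fin.succ_pred _ _⟩
    simpa [Fin.pred_le_pred_iff] using hf.1 hab
  rw [completeHomogeneous, ← sum_filter_add_sum_filter_not _ (fun f => f 0 ≠ 0), filter_filter,
    filter_filter]
  simp only [not_not, hcons, hsucc]

theorem completeHomogeneous_succ_eq_comp_castSucc (m : ℕ) {n : ℕ} (w : Fin (n + 1) → A) :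
    completeHomogeneous (m + 1) w =
      completeHomogeneous (m + 1) (w ∘ Fin.castSucc) +
        w (Fin.last n) * completeHomogeneous m w := by
  conv_lhs => rw [← completeHomogeneous_comp_rev, completeHomogeneous_succ_eq_comp_succ,
    completeHomogeneous_comp_rev]
  rw [← completeHomogeneous_comp_rev _ (w ∘ Fin.castSucc)]
  congr 2
  ext i; simp [Fin.rev_succ]

end CompleteHomogeneous

theorem natCast_mul_completeHomogeneous_inv_add (k n : ℕ) {β : ℂ} (hβ : β ≠ 0)
    (hβn : β + n ≠ 0) :
    n * completeHomogeneous k (fun i : Fin (n + 1) => (β + i)⁻¹) =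
      (β + n) * completeHomogeneous k (fun i : Fin n => (β + i)⁻¹) -
        β * completeHomogeneous k (fun i : Fin n => (β + 1 + i)⁻¹) := by
  cases k with
  | zero => simp only [completeHomogeneous_zero]; ring
  | succ m =>
    have hlast := completeHomogeneous_succ_eq_comp_castSucc m (fun i : Fin (n + 1) => (β + i)⁻¹)
    have hfirst := completeHomogeneous_succ_eq_comp_succ m (fun i : Fin (n + 1) => (β + i)⁻¹)
    have hsucc : (fun i : Fin (n + 1) => (β + i)⁻¹) ∘ Fin.succ =
        fun i : Fin n => (β + 1 + i)⁻¹ := by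
      ext i; simp [add_assoc, add_comm (1 : ℂ)]
    rw [hsucc] at hfirst
    simp only [Function.comp_def, Fin.val_castSucc, Fin.val_last, Fin.val_zero, Nat.cast_zero,
      add_zero] at hlast hfirst
    linear_combination (β + n) * hlast - β * hfirst +
      completeHomogeneous m (fun i : Fin (n + 1) => (β + i)⁻¹) *
        (mul_inv_cancel₀ hβn - mul_inv_cancel₀ hβ)

theorem mul_prod_range_add_one_add {K : Type*} [CommSemiring K] (x : K) (n : ℕ) :
    x * ∏ j ∈ range n, (x + 1 + j) = (∏ j ∈ range n, (x + j)) * (x + n) := by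
  rw [← prod_range_succ, prod_range_succ']
  push_cast
  simp only [add_assoc, add_comm (1 : K), add_zero, mul_comm]

theorem R_eq_div_mul_completeHomogeneous (s q : ℕ) (β : ℂ) :
    R s q β = q.factorial / (∏ j ∈ range (q + 1), (β + j)) *
      completeHomogeneous (s - 1) (fun i : Fin (q + 1) => (β + i)⁻¹) :=
  rfl

theorem R_recursion_general
    (s : ℕ) (β : ℂ) (hβ : ∀ k : ℕ, β ≠ -(k : ℂ)) (q : ℕ) :
    R s (q + 1) β = R s q β - R s q (β + 1) := by
  have hne (k : ℕ) : β + k ≠ 0 := fun h => hβ k (eq_neg_of_add_eq_zero_left h)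
  have hβ0 : β ≠ 0 := by simpa using hne 0
  have hβq : β + (q + 1) ≠ 0 := by exact_mod_cast hne (q + 1)
  have hpoch : ∏ j ∈ range (q + 1), (β + j) ≠ 0 := prod_ne_zero_iff.2 fun j _ => hne j
  have hpoch_shift : ∏ j ∈ range (q + 1), (β + 1 + j) =
      (∏ j ∈ range (q + 1), (β + j)) * (β + (q + 1 : ℕ)) / β :=
    eq_div_of_mul_eq hβ0 (by rw [mul_comm, mul_prod_range_add_one_add])
  have hstep := natCast_mul_completeHomogeneous_inv_add (s - 1) (q + 1) hβ0 (hne (q + 1))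
  simp only [R_eq_div_mul_completeHomogeneous]
  rw [prod_range_succ _ (q + 1), hpoch_shift, Nat.factorial_succ]
  -- abstracted so that `field_simp` does not rewrite inside the summands
  generalize completeHomogeneous (s - 1) (fun i : Fin (q + 1 + 1) => (β + i)⁻¹) = H at hstep ⊢
  generalize completeHomogeneous (s - 1) (fun i : Fin (q + 1) => (β + i)⁻¹) = X at hstep ⊢
  generalize completeHomogeneous (s - 1) (fun i : Fin (q + 1) => (β + 1 + i)⁻¹) = Y at hstep ⊢
  push_cast at hstep ⊢
  field_simp
  linear_combination (q.factorial : ℂ) * hstep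

/-- For fixed s ≥ 2, β ∉ {0,-1,-2,...} and q ≥ 0: R(q+1,β) = R(q,β) - R(q,β+1). -/
theorem R_recursion
    (s : ℕ) (hs : 2 ≤ s) (β : ℂ) (hβ : ∀ k : ℕ, β ≠ -(k : ℂ)) (q : ℕ) :
    R s (q + 1) β = R s q β - R s q (β + 1) :=
  R_recursion_general s β hβ q
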